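/- Let ψ ∈ ℂⁿ be a unit vector, f : {1,…,n} → ℝ a labeling (eigenvalue) function, ρ = ψψ† the associated pure-state density matrix (ρ_{jk} = ψ_j · conj(ψ_k)), and ρ̂ its Lüders mixture with respect to f (ρ̂_{jk} = ρ_{jk} if f(j) = f(k), else 0). Then the two-measurement probability of distinct eigenvalues equals the quantum logical entropy of the post-measurement state: Σ_{(j,k) : f(j) ≠ f(k)} ‖ψ_j‖²·‖ψ_k‖² = 1 − tr[ρ̂²]. -/

import Mathlib

open scoped Classical

noncomputable section

/-! Since `ρ_{jk} ρ_{kj} = ‖ψ_j‖² ‖ψ_k‖²`, the trace `tr[ρ̂²]` is the sum of `‖ψ_j‖² ‖ψ_k‖²` over the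
pairs with `f j = f k`, while the sum over all pairs is `(∑ ‖ψ_j‖²)² = 1`. -/

/-- The pure-state density matrix `ρ = ψψ†` of a vector `ψ`. -/
def pureDensity {n : ℕ} (ψ : Fin n → ℂ) : Matrix (Fin n) (Fin n) ℂ :=
  Matrix.of fun j k => ψ j * starRingEnd ℂ (ψ k)

/-- The Lüders mixture of a matrix `ρ` with respect to a labeling function `f`. -/
def luders {n : ℕ} (f : Fin n → ℝ) (ρ : Matrix (Fin n) (Fin n) ℂ) :
    Matrix (Fin n) (Fin n) ℂ :=
  Matrix.of fun j k => if f j = f k then ρ j k else 0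

theorem pureDensity_mul_pureDensity_swap {n : ℕ} (ψ : Fin n → ℂ) (j k : Fin n) :
    pureDensity ψ j k * pureDensity ψ k j = ((‖ψ j‖ ^ 2 * ‖ψ k‖ ^ 2 : ℝ) : ℂ) := by
  simp only [pureDensity, Matrix.of_apply]
  calc ψ j * starRingEnd ℂ (ψ k) * (ψ k * starRingEnd ℂ (ψ j))
      = (ψ j * starRingEnd ℂ (ψ j)) * (ψ k * starRingEnd ℂ (ψ k)) := by ring
    _ = _ := by simp only [Complex.mul_conj, Complex.normSq_eq_norm_sq]; push_cast; rfl

theorem trace_luders_mul_self {n : ℕ} (f : Fin n → ℝ) (ρ : Matrix (Fin n) (Fin n) ℂ) :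
    Matrix.trace (luders f ρ * luders f ρ)
      = ∑ j, ∑ k, if f j = f k then ρ j k * ρ k j else 0 := by
  simp only [Matrix.trace, Matrix.diag, Matrix.mul_apply, luders, Matrix.of_apply]
  refine Finset.sum_congr rfl fun j _ => Finset.sum_congr rfl fun k _ => ?_
  by_cases h : f j = f k <;> simp [h, eq_comm]

theorem trace_luders_pureDensity_mul_self {n : ℕ} (f : Fin n → ℝ) (ψ : Fin n → ℂ) :
    Matrix.trace (luders f (pureDensity ψ) * luders f (pureDensity ψ))
      = ((∑ j, ∑ k, if f j = f k then ‖ψ j‖ ^ 2 * ‖ψ k‖ ^ 2 else 0 : ℝ) : ℂ) := by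
  simp only [trace_luders_mul_self, pureDensity_mul_pureDensity_swap, Complex.ofReal_sum,
    apply_ite ((↑) : ℝ → ℂ), Complex.ofReal_zero]

theorem Finset.sum_sum_ite_not {ι κ M : Type*} [Fintype ι] [Fintype κ] [AddCommGroup M]
    (p : ι → κ → Prop) [∀ i k, Decidable (p i k)] (w : ι → κ → M) :
    (∑ i, ∑ k, if ¬p i k then w i k else 0)
      = ∑ i, ∑ k, w i k - ∑ i, ∑ k, if p i k then w i k else 0 := by
  rw [eq_sub_iff_add_eq, ← Finset.sum_add_distrib]
  refine Finset.sum_congr rfl fun i _ => ?_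
  rw [← Finset.sum_add_distrib]
  refine Finset.sum_congr rfl fun k _ => ?_
  by_cases h : p i k <;> simp [h]

/-- For a unit vector `ψ` with eigenvalue labels `f`, the two-measurement
probability of getting distinct eigenvalues equals the quantum logical entropy
`1 − tr[ρ̂²]` of the post-measurement (Lüders) state `ρ̂`. -/
theorem two_measurement_prob_eq_quantum_logical_entropy {n : ℕ}
    (ψ : Fin n → ℂ) (hψ : ∑ j, ‖ψ j‖ ^ 2 = 1) (f : Fin n → ℝ) :
    ((∑ j, ∑ k, if f j ≠ f k then ‖ψ j‖ ^ 2 * ‖ψ k‖ ^ 2 else 0 : ℝ) : ℂ)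
      = 1 - Matrix.trace (luders f (pureDensity ψ) * luders f (pureDensity ψ)) := by
  rw [trace_luders_pureDensity_mul_self, Finset.sum_sum_ite_not, ← Finset.sum_mul_sum, hψ]
  push_cast
  ring
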